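/- arXiv:1704.07944 — 2 statements merged into one kernel-verified Lean document; each statement's English description precedes it below -/
import Mathlib

section
/- With c > 0, r > 0 satisfying r² < c² + 1, a = −c−r, and λ_G(a−t) = ((r+t)²+r²)/(2t(2r+t)(r+t)), define μ_G(z) = (1+|z|²)·λ_G(z) and τ(a−t,a) = |t|/|1+(a−t)·a| = t/(1+(c+r+t)(c+r)). Then τ(a−t,a)·μ_G(a−t) < 1/2 for all sufficiently small t > 0. -/
/-- if `r² < c² + 1`, then `τ(a-t,a)·μ_G(a-t) < 1/2` for all sufficiently
small `t > 0`. -/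
theorem stmt_12 (c r : ℝ) (hc : 0 < c) (hr : 0 < r) (hcr : r ^ 2 < c ^ 2 + 1) :
    ∃ δ > 0, ∀ t : ℝ, 0 < t → t < δ →
      ((1 + (c + r + t) ^ 2) / (1 + (c + r) * (c + r + t))) *
        (((r + t) ^ 2 + r ^ 2) / (2 * (2 * r + t) * (r + t))) < 1 / 2 := by
  set A : ℝ := r * (1 + c ^ 2 - r ^ 2) with hA
  set K : ℝ := c * r + 3 * r ^ 2 + c + 3 * r + 1 with hK
  have hApos : 0 < A := by
    apply mul_pos hr; nlinarith
  have hKpos : 0 < K := by positivity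
  refine ⟨min 1 (A / K), lt_min one_pos (div_pos hApos hKpos), ?_⟩
  intro t ht htδ
  have ht1 : t < 1 := lt_of_lt_of_le htδ (min_le_left _ _)
  have htK : t * K < A := by
    have := lt_of_lt_of_le htδ (min_le_right _ _)
    exact (lt_div_iff₀ hKpos).mp this
  have hd1 : 0 < 1 + (c + r) * (c + r + t) := by nlinarith
  have hd2 : 0 < 2 * (2 * r + t) * (r + t) := by nlinarith
  rw [div_mul_div_comm, div_lt_div_iff₀ (by positivity) (by norm_num)]
  have h2 : t ^ 2 ≤ t := by nlinarith
  have key : t * (c * r + 3 * r ^ 2) + t ^ 2 * (c + 3 * r) + t ^ 3 < A := by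
    nlinarith [mul_le_mul_of_nonneg_right h2 (by positivity : (0:ℝ) ≤ c + 3 * r)]
  nlinarith [mul_pos ht (sub_pos.mpr key)]
end

section
/- The function F(t) = [(1+(c+r+t)²)/(1+(c+r)(c+r+t))] · [((r+t)²+r²)/(2(2r+t)(r+t))] defined for t ≥ 0 with parameters c > 0, r > 0 satisfies F(0) = 1/2 and F′(0) = −(1+c²−r²)/(4r(1+(c+r)²)). -/
/-!
With `s = c + r`, `F` is the product of `f t = (1 + (s+t)²) / (1 + s(s+t))` (the `τ` factor) and
`g t = ((r+t)² + r²) / (2(2r+t)(r+t))` (the `μ_G` factor). Here `f 0 = 1`, `f' 0 = s / (1 + s²)`,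
`g 0 = 1/2` and `g' 0 = -1/(4r)`, so the product rule gives `F' 0 = s / (2(1 + s²)) - 1/(4r)`,
which is the claimed value since `2rs - 1 - s² = r² - 1 - c²`.
-/

theorem hasDerivAt_tau_factor (s : ℝ) :
    HasDerivAt (fun t : ℝ => (1 + (s + t) ^ 2) / (1 + s * (s + t))) (s / (1 + s ^ 2)) 0 := by
  have hden : 1 + s * (s + 0) ≠ 0 := by rw [add_zero, ← sq]; positivity
  have hshift : HasDerivAt (fun t : ℝ => s + t) 1 0 := (hasDerivAt_id 0).const_add s
  refine (((hshift.pow 2).const_add 1).div ((hshift.const_mul s).const_add 1) hden).congr_deriv ?_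
  rw [add_zero, ← sq] at hden
  simp only [Pi.pow_apply, add_zero, mul_one, Nat.cast_ofNat]
  field_simp
  ring

theorem hasDerivAt_mu_factor {r : ℝ} (hr : r ≠ 0) :
    HasDerivAt (fun t : ℝ => ((r + t) ^ 2 + r ^ 2) / (2 * (2 * r + t) * (r + t)))
      (-1 / (4 * r)) 0 := by
  have hden : 2 * (2 * r + 0) * (r + 0) ≠ 0 := by simpa using hr
  have hid := hasDerivAt_id (0 : ℝ)
  have hnum := ((hid.const_add r).pow 2).add_const (r ^ 2)
  refine (hnum.div (((hid.const_add (2 * r)).const_mul 2).mul (hid.const_add r)) hden).congr_deriv ?_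
  simp only [Pi.pow_apply, Pi.mul_apply, id_eq, add_zero, mul_one, Nat.cast_ofNat]
  field_simp
  ring

theorem stmt_13_general (c r : ℝ) (hr : 0 < r) :
    (fun t : ℝ =>
        ((1 + (c + r + t) ^ 2) / (1 + (c + r) * (c + r + t))) *
          (((r + t) ^ 2 + r ^ 2) / (2 * (2 * r + t) * (r + t)))) 0 = 1 / 2 ∧
    HasDerivAt
      (fun t : ℝ =>
        ((1 + (c + r + t) ^ 2) / (1 + (c + r) * (c + r + t))) *
          (((r + t) ^ 2 + r ^ 2) / (2 * (2 * r + t) * (r + t))))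
      (-(1 + c ^ 2 - r ^ 2) / (4 * r * (1 + (c + r) ^ 2))) 0 := by
  have hs : 1 + (c + r) ^ 2 ≠ 0 := by positivity
  constructor
  · simp only [add_zero, ← sq]
    field_simp
    ring
  · refine ((hasDerivAt_tau_factor (c + r)).mul (hasDerivAt_mu_factor hr.ne')).congr_deriv ?_
    simp only [add_zero, ← sq]
    field_simp
    ring

/-- `F(0) = 1/2` and `F'(0) = -(1+c²-r²)/(4r(1+(c+r)²))` for
`F(t) = [(1+(c+r+t)²)/(1+(c+r)(c+r+t))] · [((r+t)²+r²)/(2(2r+t)(r+t))]`. -/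
theorem stmt_13 (c r : ℝ) (hc : 0 < c) (hr : 0 < r) :
    (fun t : ℝ =>
        ((1 + (c + r + t) ^ 2) / (1 + (c + r) * (c + r + t))) *
          (((r + t) ^ 2 + r ^ 2) / (2 * (2 * r + t) * (r + t)))) 0 = 1 / 2 ∧
    HasDerivAt
      (fun t : ℝ =>
        ((1 + (c + r + t) ^ 2) / (1 + (c + r) * (c + r + t))) *
          (((r + t) ^ 2 + r ^ 2) / (2 * (2 * r + t) * (r + t))))
      (-(1 + c ^ 2 - r ^ 2) / (4 * r * (1 + (c + r) ^ 2))) 0 :=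
  stmt_13_general c r hr
end
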